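/- Let s ∈ (1/2, 1) and let u : [0, 2π] → ℝ be measurable with mean zero, i.e. ∫₀^{2π} u(t) dt = 0. Then ∫₀^{2π} |u(t)|² dt ≤ (2π)^{2s} ∫₀^{2π} ∫₀^{2π} |u(t) - u(y)|² / |t - y|^{1+2s} dy dt. -/

import Mathlib

/-! On a set of diameter at most `a` the kernel `|t - y| ^ (-p)` is at least `a ^ (-p)`, so the
Gagliardo double integral dominates `a ^ (-p) ∫∫ (u t - u y)²`. For mean-zero `u` on a set of
measure `a` the latter double integral equals `2 a ∫ u²`, and with `a = 2π`, `p = 1 + 2s` this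
gives `∫ u² ≤ 2 ∫ u² ≤ (2π) ^ (2s) [u]²`. -/

open MeasureTheory Real Set

section SquaredDifferences

variable {α : Type*} [MeasurableSpace α] {μ : Measure α} [IsFiniteMeasure μ] {f : α → ℝ}

theorem integral_sub_sq (hf : Integrable f μ) (hf2 : Integrable (fun y => f y ^ 2) μ) (x : ℝ) :
    ∫ y, (x - f y) ^ 2 ∂μ = μ.real univ * x ^ 2 - 2 * x * ∫ y, f y ∂μ + ∫ y, f y ^ 2 ∂μ := by
  have hexpand : (fun y => (x - f y) ^ 2) = fun y => x ^ 2 - 2 * x * f y + f y ^ 2 := by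
    funext y; ring
  have hlin : Integrable (fun y => x ^ 2 - 2 * x * f y) μ :=
    (integrable_const _).sub (hf.const_mul _)
  rw [hexpand, integral_add hlin hf2, integral_sub (integrable_const _) (hf.const_mul _),
    integral_const, integral_const_mul, smul_eq_mul]

theorem integral_integral_sub_sq (hf : Integrable f μ) (hf2 : Integrable (fun y => f y ^ 2) μ) :
    ∫ x, ∫ y, (f x - f y) ^ 2 ∂μ ∂μ =
      2 * μ.real univ * ∫ x, f x ^ 2 ∂μ - 2 * (∫ x, f x ∂μ) ^ 2 := by
  simp_rw [integral_sub_sq hf hf2]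
  have hlin : Integrable (fun x => μ.real univ * f x ^ 2 - 2 * f x * ∫ y, f y ∂μ) μ :=
    (hf2.const_mul _).sub ((hf.const_mul 2).mul_const _)
  rw [integral_add hlin (integrable_const _),
    integral_sub (hf2.const_mul _) ((hf.const_mul 2).mul_const _), integral_const_mul,
    integral_mul_const, integral_const_mul, integral_const, smul_eq_mul]
  ring

end SquaredDifferences

theorem sq_sub_div_rpow_le_sq_sub_div_abs_sub_rpow (f : ℝ → ℝ) {t y a p : ℝ} (hp : 0 ≤ p)
    (hty : |t - y| ≤ a) :
    (f t - f y) ^ 2 / a ^ p ≤ (f t - f y) ^ 2 / |t - y| ^ p := by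
  rcases eq_or_ne t y with rfl | hne
  · simp
  · have hpos : 0 < |t - y| := abs_pos.2 (sub_ne_zero.2 hne)
    exact div_le_div_of_nonneg_left (sq_nonneg _) (rpow_pos_of_pos hpos _)
      (rpow_le_rpow hpos.le hty hp)

theorem integral_integral_sub_sq_div_rpow_le {μ : Measure ℝ} [SFinite μ] {f : ℝ → ℝ}
    {K : Set ℝ} {a p : ℝ} (hp : 0 ≤ p) (hK : MeasurableSet K)
    (hdiam : ∀ t ∈ K, ∀ y ∈ K, |t - y| ≤ a)
    (hker : IntegrableOn (fun q : ℝ × ℝ => (f q.1 - f q.2) ^ 2 / |q.1 - q.2| ^ p) (K ×ˢ K)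
      (μ.prod μ)) :
    (∫ t in K, ∫ y in K, (f t - f y) ^ 2 ∂μ ∂μ) / a ^ p ≤
      ∫ t in K, ∫ y in K, (f t - f y) ^ 2 / |t - y| ^ p ∂μ ∂μ := by
  obtain rfl | ⟨t₀, ht₀⟩ := K.eq_empty_or_nonempty
  · simp
  have ha : 0 ≤ a := (abs_nonneg _).trans (hdiam t₀ ht₀ t₀ ht₀)
  rw [IntegrableOn, ← Measure.prod_restrict] at hker
  simp_rw [← integral_div]
  refine integral_mono_of_nonneg
    (.of_forall fun t => integral_nonneg fun y => by positivity) hker.integral_prod_left ?_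
  filter_upwards [hker.prod_right_ae, ae_restrict_mem hK] with t hsec ht
  refine integral_mono_of_nonneg (.of_forall fun y => by positivity) hsec ?_
  filter_upwards [ae_restrict_mem hK] with y hy
  exact sq_sub_div_rpow_le_sq_sub_div_abs_sub_rpow f hp (hdiam t ht y hy)

theorem fractional_poincare_general
    (s : ℝ) (hs : s ∈ Set.Ioo (1/2 : ℝ) 1)
    (u : ℝ → ℝ)
    (hint : IntegrableOn u (Set.Ioc 0 (2 * π)))
    (hint2 : IntegrableOn (fun t => u t ^ 2) (Set.Ioc 0 (2 * π)))
    (hker : IntegrableOn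
      (fun p : ℝ × ℝ => (u p.1 - u p.2) ^ 2 / |p.1 - p.2| ^ (1 + 2 * s))
      ((Set.Ioc 0 (2 * π)) ×ˢ (Set.Ioc 0 (2 * π))))
    (hmean : ∫ t in Set.Ioc 0 (2 * π), u t = 0) :
    ∫ t in Set.Ioc 0 (2 * π), |u t| ^ 2 ≤
      (2 * π) ^ (2 * s) *
        ∫ t in Set.Ioc 0 (2 * π), ∫ y in Set.Ioc 0 (2 * π),
          |u t - u y| ^ 2 / |t - y| ^ (1 + 2 * s) := by
  simp only [sq_abs]
  set a := 2 * π
  have ha : 0 < a := by positivity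
  have hdiam : ∀ t ∈ Ioc 0 a, ∀ y ∈ Ioc 0 a, |t - y| ≤ a := fun t ht y hy =>
    abs_sub_le_iff.2 ⟨by linarith [ht.2, hy.1], by linarith [ht.1, hy.2]⟩
  rw [Measure.volume_eq_prod] at hker
  have hbound := integral_integral_sub_sq_div_rpow_le (by linarith [hs.1]) measurableSet_Ioc
    hdiam hker
  rw [integral_integral_sub_sq hint hint2, hmean, measureReal_restrict_apply_univ,
    volume_real_Ioc_of_le ha.le, sub_zero, zero_pow two_ne_zero, mul_zero, sub_zero] at hbound
  set C := ∫ t in Ioc 0 a, u t ^ 2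
  have hC : 0 ≤ C := setIntegral_nonneg measurableSet_Ioc fun t _ => sq_nonneg _
  calc C ≤ 2 * C := by linarith
    _ = a ^ (2 * s) * (2 * a * C / a ^ (1 + 2 * s)) := by
      rw [rpow_add ha, rpow_one]; field_simp
    _ ≤ _ := by gcongr

/-- Fractional Poincaré inequality: for a mean-zero function on (0,2π),
`∫ |u|² ≤ (2π)^{2s} [u]²_{H^s(0,2π)}`. -/
theorem fractional_poincare
    (s : ℝ) (hs : s ∈ Set.Ioo (1/2 : ℝ) 1)
    (u : ℝ → ℝ) (hmeas : Measurable u)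
    (hint : IntegrableOn u (Set.Ioc 0 (2 * π)))
    (hint2 : IntegrableOn (fun t => u t ^ 2) (Set.Ioc 0 (2 * π)))
    (hker : IntegrableOn
      (fun p : ℝ × ℝ => (u p.1 - u p.2) ^ 2 / |p.1 - p.2| ^ (1 + 2 * s))
      ((Set.Ioc 0 (2 * π)) ×ˢ (Set.Ioc 0 (2 * π))))
    (hmean : ∫ t in Set.Ioc 0 (2 * π), u t = 0) :
    ∫ t in Set.Ioc 0 (2 * π), |u t| ^ 2 ≤
      (2 * π) ^ (2 * s) *
        ∫ t in Set.Ioc 0 (2 * π), ∫ y in Set.Ioc 0 (2 * π),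
          |u t - u y| ^ 2 / |t - y| ^ (1 + 2 * s) :=
  fractional_poincare_general s hs u hint hint2 hker hmean
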